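/- Let g₁, g₂ ∈ L²(𝕊^{d-1}) with g₂ = g₂^♯ symmetric decreasing about e₁, g₁ not a.e. constant, and suppose |{g₂ = t}| = 0 for every t ∈ ℝ. If ∫_{𝕊^{d-1}} g₁ g₂ = ∫_{𝕊^{d-1}} g₁^♯ g₂^♯, then g₁ = g₁^♯, i.e., every superlevel set {g₁ > t} is (up to null sets) a geodesic cap centered at e₁. -/

import Mathlib

open MeasureTheory Metric Set
open scoped ENNReal RealInnerProductSpace

noncomputable section

abbrev Euc (d : ℕ) := EuclideanSpace ℝ (Fin d)

/-- The distinguished direction e₁ of ℝ^d (pole of the cap symmetrisation). -/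
def e1 (d : ℕ) : Euc d :=
  if h : 0 < d then EuclideanSpace.single (⟨0, h⟩ : Fin d) 1 else 0

/-- The (d-1)-dimensional Hausdorff measure on the sphere 𝕊^{d-1}_r of radius r. -/
def sphMeas (d : ℕ) (r : ℝ) : Measure (Euc d) :=
  (μH[(d : ℝ) - 1]).restrict (sphere (0 : Euc d) r)

/-- `IsCapSymm d f fs` expresses that `fs` is the cap symmetrisation `f^♯` of `f` on the
unit ball: on a.e. sphere 𝕊^{d-1}_r (0 < r ≤ 1), `fs` is equimeasurable with `f` and is
a symmetric nonincreasing function of the geodesic distance to r·e₁ (equivalently,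
nondecreasing in the inner product with e₁ at fixed radius). -/
def IsCapSymm (d : ℕ) (f fs : Euc d → ℝ) : Prop :=
  (∀ x y : Euc d, ‖x‖ = ‖y‖ → ⟪x, e1 d⟫ ≤ ⟪y, e1 d⟫ → fs x ≤ fs y) ∧
  ∀ᵐ r ∂(volume.restrict (Ioc (0 : ℝ) 1)), ∀ t : ℝ,
    sphMeas d r {x | t ≤ f x} = sphMeas d r {x | t ≤ fs x}

/-- `IsCapSymmSphere d g gs` expresses that `gs` is the symmetric decreasing
rearrangement (cap symmetrisation) `g^♯` of `g` on the unit sphere 𝕊^{d-1}, about e₁. -/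
def IsCapSymmSphere (d : ℕ) (g gs : Euc d → ℝ) : Prop :=
  (∀ x y : Euc d, x ∈ sphere (0 : Euc d) 1 → y ∈ sphere (0 : Euc d) 1 →
    ⟪x, e1 d⟫ ≤ ⟪y, e1 d⟫ → gs x ≤ gs y) ∧
  ∀ t : ℝ, sphMeas d 1 {x | t ≤ g x} = sphMeas d 1 {x | t ≤ gs x}

/-!
Write `f = g₁^♯ - g₁` and `C_t = {g₂ ≥ t}`. Both `g₁^♯` and `g₂` are nondecreasing in `⟪x, e₁⟫`,
so `g₁^♯` lies above some level `τ_t` on `C_t` and below it off `C_t`. Since `g₁` has the same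
distribution, the bathtub principle gives `G(t) = ∫_{C_t} f ≥ 0`, with equality only if `g₁` too
is `≥ τ_t` on `C_t` and `≤ τ_t` off it. By the layer-cake formula `∫ G = ∫ f g₂ = 0`, so
`G(t) = 0` for a.e. `t`. A set on which some `s` lies strictly between `g₁` and `g₁^♯` is then
essentially on one side of almost every level of `g₂`, hence inside a single level set of `g₂`,
which is null.
-/

open Filter ProbabilityTheory
open scoped NNReal

def signedIndicator (a : ℝ) : ℝ → ℝ := (Ioc 0 a).indicator 1 - (Ioc a 0).indicator 1

theorem signedIndicator_apply (a t : ℝ) :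
    signedIndicator a t = (if t ≤ a then 1 else 0) - (if t ≤ 0 then 1 else 0) := by
  simp only [signedIndicator, Pi.sub_apply, indicator_apply, mem_Ioc, Pi.one_apply]
  split_ifs <;> grind

theorem measurable_signedIndicator_uncurry :
    Measurable fun p : ℝ × ℝ => signedIndicator p.1 p.2 := by
  simp only [signedIndicator_apply]
  exact (Measurable.ite (measurableSet_le measurable_snd measurable_fst) measurable_const
    measurable_const).sub (Measurable.ite (measurableSet_le measurable_snd measurable_const)
    measurable_const measurable_const)

theorem integrable_indicator_Ioc_one (b c : ℝ) : Integrable ((Ioc b c).indicator (1 : ℝ → ℝ)) :=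
  (integrable_indicator_iff measurableSet_Ioc).2 (integrableOn_const measure_Ioc_lt_top.ne)

theorem integrable_signedIndicator (a : ℝ) : Integrable (signedIndicator a) :=
  (integrable_indicator_Ioc_one _ _).sub (integrable_indicator_Ioc_one _ _)

theorem integral_signedIndicator (a : ℝ) : ∫ t, signedIndicator a t = a := by
  simp only [signedIndicator, Pi.sub_apply]
  rw [integral_sub (integrable_indicator_Ioc_one _ _) (integrable_indicator_Ioc_one _ _),
    integral_indicator_one measurableSet_Ioc, integral_indicator_one measurableSet_Ioc,
    Real.volume_real_Ioc, Real.volume_real_Ioc, sub_zero, zero_sub, max_zero_sub_max_neg_zero_eq_self]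

theorem integral_abs_signedIndicator (a : ℝ) : ∫ t, |signedIndicator a t| = |a| := by
  have habs (t : ℝ) :
      |signedIndicator a t| = (Ioc 0 a).indicator 1 t + (Ioc a 0).indicator 1 t := by
    simp only [signedIndicator, Pi.sub_apply, indicator_apply, mem_Ioc, Pi.one_apply]
    split_ifs <;> grind
  simp only [habs]
  rw [integral_add (integrable_indicator_Ioc_one _ _) (integrable_indicator_Ioc_one _ _),
    integral_indicator_one measurableSet_Ioc, integral_indicator_one measurableSet_Ioc,
    Real.volume_real_Ioc, Real.volume_real_Ioc, sub_zero, zero_sub,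
    max_zero_add_max_neg_zero_eq_abs_self]

section Rigidity

variable {α : Type*} [MeasurableSpace α] {μ : Measure α}

theorem identDistrib_of_measure_le_eq [IsFiniteMeasure μ] {f g : α → ℝ}
    (hf : AEMeasurable f μ) (hg : AEMeasurable g μ)
    (h : ∀ t, μ {x | t ≤ f x} = μ {x | t ≤ g x}) : IdentDistrib f g μ μ where
  aemeasurable_fst := hf
  aemeasurable_snd := hg
  map_eq := Measure.ext_of_Ici _ _ fun t => by
    rw [Measure.map_apply_of_aemeasurable hf measurableSet_Ici,
      Measure.map_apply_of_aemeasurable hg measurableSet_Ici]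
    exact h t

theorem ae_imp_le_of_setIntegral_max_sub_eq_zero {u v : α → ℝ} {C : Set α}
    (hC : MeasurableSet C) (hint : Integrable (fun x => max (u x - v x) 0) μ)
    (h : ∫ x in C, max (u x - v x) 0 ∂μ = 0) : ∀ᵐ x ∂μ, x ∈ C → u x ≤ v x := by
  have hzero :=
    (integral_eq_zero_iff_of_nonneg (fun x => le_max_right _ _) hint.integrableOn).1 h
  filter_upwards [(ae_restrict_iff' hC).1 hzero] with x hx hxC
  simpa using hx hxC

/-- The bathtub principle in exact form: both terms on the right are nonnegative. -/
theorem setIntegral_sub_eq_of_identDistrib [IsFiniteMeasure μ] {g h : α → ℝ}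
    (hgh : IdentDistrib g h μ μ) (hg : Integrable g μ) (hh : Integrable h μ)
    {C : Set α} (hC : MeasurableSet C) {τ : ℝ}
    (hhC : ∀ᵐ x ∂μ, x ∈ C → τ ≤ h x) (hhCc : ∀ᵐ x ∂μ, x ∉ C → h x ≤ τ) :
    ∫ x in C, (h x - g x) ∂μ
      = ∫ x in C, max (τ - g x) 0 ∂μ + ∫ x in Cᶜ, max (g x - τ) 0 ∂μ := by
  have hgτ : Integrable (fun x => g x - τ) μ := hg.sub (integrable_const τ)
  have hhτ : Integrable (fun x => h x - τ) μ := hh.sub (integrable_const τ)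
  have hpos : ∫ x, max (g x - τ) 0 ∂μ = ∫ x, max (h x - τ) 0 ∂μ :=
    (hgh.comp (u := fun r => max (r - τ) 0) (by fun_prop)).integral_eq
  have hhC' : ∫ x in C, (h x - τ) ∂μ = ∫ x, max (h x - τ) 0 ∂μ := by
    rw [← integral_indicator hC]
    refine integral_congr_ae ?_
    filter_upwards [hhC, hhCc] with x h₁ h₂
    by_cases hx : x ∈ C
    · simp [hx, h₁ hx]
    · simp [hx, h₂ hx]
  have hgτ' : Integrable (fun x => max (g x - τ) 0) μ := by simpa using hgτ.pos_part
  have hsplit := integral_add_compl hC hgτ'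
  have hgC : ∫ x in C, max (τ - g x) 0 ∂μ
      = ∫ x in C, max (g x - τ) 0 ∂μ - ∫ x in C, (g x - τ) ∂μ := by
    rw [← integral_sub hgτ'.integrableOn hgτ.integrableOn]
    congr 1 with x
    simp only [max_def]
    split_ifs <;> linarith
  have hdiff : ∫ x in C, (h x - g x) ∂μ = ∫ x in C, (h x - τ) ∂μ - ∫ x in C, (g x - τ) ∂μ := by
    rw [← integral_sub hhτ.integrableOn hgτ.integrableOn]
    congr 1 with x
    ring
  linarith

theorem setIntegral_sub_nonneg_of_identDistrib [IsFiniteMeasure μ] {g h : α → ℝ}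
    (hgh : IdentDistrib g h μ μ) (hg : Integrable g μ) (hh : Integrable h μ)
    {C : Set α} (hC : MeasurableSet C) {τ : ℝ}
    (hhC : ∀ᵐ x ∂μ, x ∈ C → τ ≤ h x) (hhCc : ∀ᵐ x ∂μ, x ∉ C → h x ≤ τ) :
    0 ≤ ∫ x in C, (h x - g x) ∂μ := by
  rw [setIntegral_sub_eq_of_identDistrib hgh hg hh hC hhC hhCc]
  exact add_nonneg (setIntegral_nonneg hC fun _ _ => le_max_right _ _)
    (setIntegral_nonneg hC.compl fun _ _ => le_max_right _ _)

theorem ae_le_of_setIntegral_sub_eq_zero [IsFiniteMeasure μ] {g h : α → ℝ}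
    (hgh : IdentDistrib g h μ μ) (hg : Integrable g μ) (hh : Integrable h μ)
    {C : Set α} (hC : MeasurableSet C) {τ : ℝ}
    (hhC : ∀ᵐ x ∂μ, x ∈ C → τ ≤ h x) (hhCc : ∀ᵐ x ∂μ, x ∉ C → h x ≤ τ)
    (h0 : ∫ x in C, (h x - g x) ∂μ = 0) :
    (∀ᵐ x ∂μ, x ∈ C → τ ≤ g x) ∧ ∀ᵐ x ∂μ, x ∉ C → g x ≤ τ := by
  rw [setIntegral_sub_eq_of_identDistrib hgh hg hh hC hhC hhCc] at h0
  obtain ⟨h₁, h₂⟩ := (add_eq_zero_iff_of_nonneg (setIntegral_nonneg hC fun _ _ => le_max_right _ _)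
    (setIntegral_nonneg hC.compl fun _ _ => le_max_right _ _)).1 h0
  exact ⟨ae_imp_le_of_setIntegral_max_sub_eq_zero hC
      (by simpa using ((integrable_const τ).sub hg).pos_part) h₁,
    ae_imp_le_of_setIntegral_max_sub_eq_zero hC.compl
      (by simpa using (hg.sub (integrable_const τ)).pos_part) h₂⟩

theorem integral_setIntegral_le_eq_integral_mul [SFinite μ] {f g : α → ℝ}
    (hf : Integrable f μ) (hg : Measurable g) (hfg : Integrable (fun x => f x * g x) μ)
    (hf0 : ∫ x, f x ∂μ = 0) :
    Integrable (fun t => ∫ x in {x | t ≤ g x}, f x ∂μ) ∧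
      ∫ t, ∫ x in {x | t ≤ g x}, f x ∂μ = ∫ x, f x * g x ∂μ := by
  -- Fubini for `F (x, t) = f x * (𝟙{t ≤ g x} - 𝟙{t ≤ 0})`: the `𝟙{t ≤ 0}` part vanishes
  -- after integrating in `x` because `∫ f = 0`.
  set F : α × ℝ → ℝ := fun p => f p.1 * signedIndicator (g p.1) p.2 with hF_def
  have hFm : AEStronglyMeasurable F (μ.prod volume) :=
    hf.1.comp_fst.mul (measurable_signedIndicator_uncurry.comp
      ((hg.comp measurable_fst).prodMk measurable_snd)).aestronglyMeasurable
  have hF : Integrable F (μ.prod volume) := by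
    refine (integrable_prod_iff hFm).2
      ⟨.of_forall fun x => (integrable_signedIndicator (g x)).const_mul (f x), ?_⟩
    simpa only [hF_def, norm_mul, Real.norm_eq_abs, integral_const_mul,
      integral_abs_signedIndicator, abs_mul] using hfg.abs
  have hsection (t : ℝ) : ∫ x, F (x, t) ∂μ = ∫ x in {x | t ≤ g x}, f x ∂μ := by
    have hpt (x : α) : F (x, t) = {x | t ≤ g x}.indicator f x - if t ≤ 0 then f x else 0 := by
      simp only [hF_def, signedIndicator_apply, indicator_apply, mem_ofPred_eq]
      split_ifs <;> ring
    simp_rw [hpt]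
    rw [integral_sub ((integrable_indicator_iff (measurableSet_le measurable_const hg)).2
      hf.integrableOn) (by split_ifs; exacts [hf, integrable_zero _ _ _]),
      integral_indicator (measurableSet_le measurable_const hg)]
    split_ifs <;> simp [hf0]
  refine ⟨?_, ?_⟩
  · simpa only [hsection] using hF.integral_prod_right
  · calc ∫ t, ∫ x in {x | t ≤ g x}, f x ∂μ = ∫ t, ∫ x, F (x, t) ∂μ := by simp only [hsection]
      _ = ∫ x, (∫ t, F (x, t)) ∂μ := (integral_integral_swap hF).symm
      _ = ∫ x, f x * g x ∂μ := by
        simp only [hF_def, integral_const_mul, integral_signedIndicator]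

theorem measure_eq_zero_of_null_off_level {A : Set α} {g : α → ℝ} {c : ℝ}
    (hc : μ {x | g x = c} = 0) (hbelow : ∀ t < c, μ (A ∩ {x | g x < t}) = 0)
    (habove : ∀ t > c, μ (A ∩ {x | t ≤ g x}) = 0) : μ A = 0 := by
  refine measure_mono_null (t := {x | g x = c} ∪
      (⋃ q ∈ {q : ℚ | (q : ℝ) < c}, A ∩ {x | g x < q}) ∪
      ⋃ q ∈ {q : ℚ | c < q}, A ∩ {x | (q : ℝ) ≤ g x}) (fun x hx => ?_) ?_
  · rcases lt_trichotomy (g x) c with hlt | heq | hgt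
    · obtain ⟨q, hxq, hqc⟩ := exists_rat_btwn hlt
      exact Or.inl (Or.inr (mem_biUnion hqc ⟨hx, hxq⟩))
    · exact Or.inl (Or.inl heq)
    · obtain ⟨q, hcq, hqx⟩ := exists_rat_btwn hgt
      exact Or.inr (mem_biUnion hcq ⟨hx, hqx.le⟩)
  · exact measure_union_null (measure_union_null hc
      ((measure_biUnion_null_iff (to_countable _)).2 fun q hq => hbelow q hq))
      ((measure_biUnion_null_iff (to_countable _)).2 fun q hq => habove q hq)

/-- Such an `A` lies essentially in a single level set of `g`, namely `{g = sSup D}` below. -/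
theorem measure_eq_zero_of_ae_superlevel_dichotomy {A : Set α} {g : α → ℝ}
    (hlev : ∀ c, μ {x | g x = c} = 0)
    (hsplit : ∀ᵐ t, μ (A ∩ {x | t ≤ g x}) = 0 ∨ μ (A ∩ {x | g x < t}) = 0) : μ A = 0 := by
  by_contra hA
  set D := {t : ℝ | μ (A ∩ {x | t ≤ g x}) ≠ 0}
  set B := {t : ℝ | μ (A ∩ {x | g x < t}) ≠ 0}
  have hDne : D.Nonempty := by
    by_contra hD
    have hnull (n : ℕ) : μ (A ∩ {x | -(n : ℝ) ≤ g x}) = 0 := not_not.1 fun h => hD ⟨_, h⟩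
    refine hA (measure_mono_null (fun x hx => ?_) (measure_iUnion_null hnull))
    obtain ⟨n, hn⟩ := exists_nat_ge (-g x)
    exact mem_iUnion.2 ⟨n, hx, by simp only [mem_ofPred_eq]; linarith⟩
  have hBne : B.Nonempty := by
    by_contra hB
    have hnull (n : ℕ) : μ (A ∩ {x | g x < n}) = 0 := not_not.1 fun h => hB ⟨_, h⟩
    refine hA (measure_mono_null (fun x hx => ?_) (measure_iUnion_null hnull))
    obtain ⟨n, hn⟩ := exists_nat_gt (g x)
    exact mem_iUnion.2 ⟨n, hx, hn⟩
  have hDB : ∀ d ∈ D, ∀ b ∈ B, d ≤ b := by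
    intro d hd b hb
    by_contra! hbd
    obtain ⟨t, ⟨hbt, htd⟩, ht⟩ := Measure.exists_mem_of_measure_ne_zero_of_ae
      (by simpa [Real.volume_Ioo] using hbd : volume (Ioo b d) ≠ 0) (ae_restrict_of_ae hsplit)
    rcases ht with ht | ht
    · exact hd (measure_mono_null (inter_subset_inter_right _ fun x hx => htd.le.trans hx) ht)
    · exact hb (measure_mono_null (inter_subset_inter_right _ fun x hx => hx.trans hbt) ht)
  have hbdd : BddAbove D := hBne.mono fun b hb d hd => hDB d hd b hb
  refine hA (measure_eq_zero_of_null_off_level (hlev (sSup D)) (fun t htc => ?_) fun t hct => ?_)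
  · exact not_not.1 fun ht => (csSup_le hDne fun d hd => hDB d hd t ht).not_gt htc
  · exact not_not.1 fun ht => (le_csSup hbdd ht).not_gt hct

theorem exists_threshold_of_lt_imp_le {S : Set α} {g h : α → ℝ} (hS : ∀ᵐ x ∂μ, x ∈ S)
    (hmono : ∀ x ∈ S, ∀ y ∈ S, g x < g y → h x ≤ h y) {t : ℝ}
    (hC : μ {x | t ≤ g x} ≠ 0) (hCc : μ {x | g x < t} ≠ 0) :
    ∃ τ, (∀ᵐ x ∂μ, t ≤ g x → τ ≤ h x) ∧ ∀ᵐ x ∂μ, g x < t → h x ≤ τ := by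
  obtain ⟨y, hyC, hyS⟩ := Measure.exists_mem_of_measure_ne_zero_of_ae hC (ae_restrict_of_ae hS)
  obtain ⟨z, hzC, hzS⟩ := Measure.exists_mem_of_measure_ne_zero_of_ae hCc (ae_restrict_of_ae hS)
  obtain ⟨τ, hτlo, hτhi⟩ := exists_between_of_forall_le (s := h '' {x | x ∈ S ∧ g x < t})
    (t := h '' {x | x ∈ S ∧ t ≤ g x}) ⟨h z, z, ⟨hzS, hzC⟩, rfl⟩ ⟨h y, y, ⟨hyS, hyC⟩, rfl⟩
    (by
      rintro _ ⟨x, ⟨hxS, hx⟩, rfl⟩ _ ⟨y, ⟨hyS, hy⟩, rfl⟩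
      exact hmono x hxS y hyS (hx.trans_le hy))
  exact ⟨τ, hS.mono fun x hxS hx => hτhi ⟨x, ⟨hxS, hx⟩, rfl⟩,
    hS.mono fun x hxS hx => hτlo ⟨x, ⟨hxS, hx⟩, rfl⟩⟩

theorem measure_uIoo_inter_eq_zero_or {g h : α → ℝ} {C : Set α} {τ : ℝ}
    (hC : ∀ᵐ x ∂μ, x ∈ C → τ ≤ g x ∧ τ ≤ h x) (hCc : ∀ᵐ x ∂μ, x ∉ C → g x ≤ τ ∧ h x ≤ τ)
    (s : ℝ) :
    μ ({x | s ∈ uIoo (g x) (h x)} ∩ C) = 0 ∨ μ ({x | s ∈ uIoo (g x) (h x)} ∩ Cᶜ) = 0 := by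
  simp only [measure_eq_zero_iff_ae_notMem, mem_inter_iff, mem_ofPred_eq, uIoo, mem_Ioo,
    mem_compl_iff]
  rcases le_or_gt s τ with hsτ | hτs
  · left
    filter_upwards [hC] with x hx ⟨⟨hlo, _⟩, hxC⟩
    exact (hlo.trans_le hsτ).not_ge (le_min (hx hxC).1 (hx hxC).2)
  · right
    filter_upwards [hCc] with x hx ⟨⟨_, hhi⟩, hxC⟩
    exact lt_asymm (hhi.trans_le (max_le (hx hxC).1 (hx hxC).2)) hτs

theorem setIntegral_superlevel_sub_nonneg_and_dichotomy [IsFiniteMeasure μ] {S : Set α}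
    {g₁ h g : α → ℝ} (hS : ∀ᵐ x ∂μ, x ∈ S) (hg₁ : Integrable g₁ μ) (hh : Integrable h μ)
    (hdist : IdentDistrib g₁ h μ μ) (hg : Measurable g)
    (hmono : ∀ x ∈ S, ∀ y ∈ S, g x < g y → h x ≤ h y) (t : ℝ) :
    0 ≤ ∫ x in {x | t ≤ g x}, (h x - g₁ x) ∂μ ∧
      (∫ x in {x | t ≤ g x}, (h x - g₁ x) ∂μ = 0 → ∀ s,
        μ ({x | s ∈ uIoo (g₁ x) (h x)} ∩ {x | t ≤ g x}) = 0 ∨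
          μ ({x | s ∈ uIoo (g₁ x) (h x)} ∩ {x | g x < t}) = 0) := by
  have hC : MeasurableSet {x | t ≤ g x} := measurableSet_le measurable_const hg
  have hCc : {x | t ≤ g x}ᶜ = {x | g x < t} := by ext; simp
  by_cases hC0 : μ {x | t ≤ g x} = 0
  · rw [setIntegral_measure_zero _ hC0]
    exact ⟨le_rfl, fun _ _ => Or.inl (measure_mono_null inter_subset_right hC0)⟩
  by_cases hCc0 : μ {x | g x < t} = 0
  · have hfull : μ.restrict {x | t ≤ g x} = μ :=
      Measure.restrict_eq_self_of_ae_mem (ae_iff.2 (by simpa using hCc0))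
    rw [hfull, integral_sub hh hg₁, hdist.integral_eq, sub_self]
    exact ⟨le_rfl, fun _ _ => Or.inr (measure_mono_null inter_subset_right hCc0)⟩
  obtain ⟨τ, hhC, hhCc⟩ := exists_threshold_of_lt_imp_le hS hmono hC0 hCc0
  have hhCc' : ∀ᵐ x ∂μ, x ∉ {x | t ≤ g x} → h x ≤ τ :=
    hhCc.mono fun x hx hxC => hx (not_le.1 hxC)
  refine ⟨setIntegral_sub_nonneg_of_identDistrib hdist hg₁ hh hC hhC hhCc', fun h0 s => ?_⟩
  obtain ⟨hg₁C, hg₁Cc⟩ := ae_le_of_setIntegral_sub_eq_zero hdist hg₁ hh hC hhC hhCc' h0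
  rw [← hCc]
  exact measure_uIoo_inter_eq_zero_or
    (by filter_upwards [hg₁C, hhC] with x h₁ h₂ hx using ⟨h₁ hx, h₂ hx⟩)
    (by filter_upwards [hg₁Cc, hhCc'] with x h₁ h₂ hx using ⟨h₁ hx, h₂ hx⟩) s

theorem ae_eq_of_integral_mul_eq_of_measurable [IsFiniteMeasure μ] {S : Set α}
    {g₁ h g : α → ℝ}
    (hS : ∀ᵐ x ∂μ, x ∈ S) (hg₁ : Integrable g₁ μ) (hh : Integrable h μ)
    (hdist : IdentDistrib g₁ h μ μ) (hg : Measurable g)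
    (hmono : ∀ x ∈ S, ∀ y ∈ S, g x < g y → h x ≤ h y) (hlev : ∀ c, μ {x | g x = c} = 0)
    (hg₁g : Integrable (fun x => g₁ x * g x) μ) (hhg : Integrable (fun x => h x * g x) μ)
    (heq : ∫ x, g₁ x * g x ∂μ = ∫ x, h x * g x ∂μ) : g₁ =ᵐ[μ] h := by
  have hsplit := setIntegral_superlevel_sub_nonneg_and_dichotomy hS hg₁ hh hdist hg hmono
  obtain ⟨hGint, hG⟩ := integral_setIntegral_le_eq_integral_mul (f := fun x => h x - g₁ x)
    (hh.sub hg₁) hg (by simpa only [sub_mul] using hhg.sub' hg₁g)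
    (by rw [integral_sub hh hg₁, hdist.integral_eq, sub_self])
  have hG0 : ∀ᵐ t, ∫ x in {x | t ≤ g x}, (h x - g₁ x) ∂μ = 0 := by
    refine (integral_eq_zero_iff_of_nonneg (fun t => (hsplit t).1) hGint).1 ?_
    rw [hG]
    simp only [sub_mul]
    rw [integral_sub hhg hg₁g, heq, sub_self]
  have hnull (s : ℝ) : μ {x | s ∈ uIoo (g₁ x) (h x)} = 0 :=
    measure_eq_zero_of_ae_superlevel_dichotomy hlev (hG0.mono fun t ht => (hsplit t).2 ht s)
  refine measure_mono_null (fun x (hx : g₁ x ≠ h x) => ?_)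
    (measure_iUnion_null fun q : ℚ => hnull q)
  obtain ⟨q, hq⟩ := exists_rat_btwn (min_lt_max.2 hx)
  exact mem_iUnion.2 ⟨q, hq⟩

theorem ae_eq_of_integral_mul_eq [IsFiniteMeasure μ] {S : Set α} {g₁ h g : α → ℝ}
    (hS : ∀ᵐ x ∂μ, x ∈ S) (hg₁ : Integrable g₁ μ) (hh : Integrable h μ)
    (hdist : IdentDistrib g₁ h μ μ) (hg : AEMeasurable g μ)
    (hmono : ∀ x ∈ S, ∀ y ∈ S, g x < g y → h x ≤ h y) (hlev : ∀ c, μ {x | g x = c} = 0)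
    (hg₁g : Integrable (fun x => g₁ x * g x) μ) (hhg : Integrable (fun x => h x * g x) μ)
    (heq : ∫ x, g₁ x * g x ∂μ = ∫ x, h x * g x ∂μ) : g₁ =ᵐ[μ] h := by
  have hmk := hg.ae_eq_mk
  refine ae_eq_of_integral_mul_eq_of_measurable (S := S ∩ {x | g x = hg.mk g x}) (hS.and hmk)
    hg₁ hh hdist hg.measurable_mk (fun x hx y hy hxy => hmono x hx.1 y hy.1 (by rwa [hx.2, hy.2]))
    (fun c => ?_) (hg₁g.congr (.mul .rfl hmk)) (hhg.congr (.mul .rfl hmk)) ?_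
  · rw [← hlev c]
    exact measure_congr (hmk.mono fun x (hx : g x = _) => show (_ = c) = (_ = c) by rw [hx])
  · convert heq using 1 <;> exact integral_congr_ae (hmk.mono fun x hx => by simp only [hx])

end Rigidity

theorem lipschitzOnWith_normalize {E : Type*} [NormedAddCommGroup E] [NormedSpace ℝ E] :
    LipschitzOnWith 2 (NormedSpace.normalize : E → E) {x | 1 ≤ ‖x‖} := by
  refine LipschitzOnWith.of_dist_le_mul fun x (hx : 1 ≤ ‖x‖) y (hy : 1 ≤ ‖y‖) => ?_
  have hx0 : 0 < ‖x‖ := one_pos.trans_le hx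
  have hy0 : y ≠ 0 := norm_pos_iff.1 (one_pos.trans_le hy)
  have hsplit : NormedSpace.normalize x - NormedSpace.normalize y
      = ‖x‖⁻¹ • ((x - y) + (‖y‖ - ‖x‖) • NormedSpace.normalize y) := by
    simp only [NormedSpace.normalize, smul_add, smul_sub, smul_smul]
    match_scalars <;> field_simp; ring
  have hnorm : ‖(‖y‖ - ‖x‖) • NormedSpace.normalize y‖ ≤ ‖x - y‖ := by
    rw [norm_smul, NormedSpace.norm_normalize_eq_one_iff.2 hy0, mul_one, Real.norm_eq_abs,
      norm_sub_rev x]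
    exact abs_norm_sub_norm_le y x
  rw [dist_eq_norm, dist_eq_norm, hsplit, norm_smul, norm_inv, norm_norm, NNReal.coe_ofNat]
  calc ‖x‖⁻¹ * ‖x - y + (‖y‖ - ‖x‖) • NormedSpace.normalize y‖ ≤ 1 * (‖x - y‖ + ‖x - y‖) :=
        mul_le_mul (inv_le_one_of_one_le₀ hx) (norm_add_le_of_le le_rfl hnorm) (norm_nonneg _)
          zero_le_one
    _ = 2 * ‖x - y‖ := by ring

theorem sphere_subset_iUnion_normalize_face (m : ℕ) :
    sphere (0 : EuclideanSpace ℝ (Fin (m + 1))) 1 ⊆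
      ⋃ i, ⋃ σ ∈ ({-1, 1} : Finset ℝ),
        (fun y => NormedSpace.normalize (WithLp.toLp 2 (Fin.insertNth i σ y))) '' Icc (-1) 1 := by
  intro x hx
  rw [mem_sphere_zero_iff_norm] at hx
  obtain ⟨i, -, hi⟩ := Finset.exists_max_image Finset.univ (fun j => |x j|) Finset.univ_nonempty
  have hc : 0 < |x i| := by
    by_contra! h
    have : x = 0 := by ext j; simpa using (hi j (Finset.mem_univ j)).trans h
    simp [this] at hx
  set f : Fin (m + 1) → ℝ := fun j => x j / |x i| with hf
  have hbox (k : Fin (m + 1)) : |f k| ≤ 1 := by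
    rw [hf, abs_div, abs_abs, div_le_one hc]
    exact hi k (Finset.mem_univ k)
  refine mem_iUnion.2 ⟨i, mem_iUnion₂.2 ⟨f i, ?_, Fin.removeNth i f,
    ⟨fun j => (abs_le.1 (hbox _)).1, fun j => (abs_le.1 (hbox _)).2⟩, ?_⟩⟩
  · rcases lt_or_gt_of_ne (abs_pos.1 hc) with h | h
    · simp [hf, abs_of_neg h, div_neg, div_self h.ne]
    · simp [hf, abs_of_pos h, div_self h.ne']
  · dsimp only
    have hfx : WithLp.toLp 2 f = |x i|⁻¹ • x := by ext j; simp [hf, div_eq_inv_mul]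
    rw [Fin.insertNth_self_removeNth, hfx, NormedSpace.normalize_smul_of_pos (inv_pos.2 hc),
      NormedSpace.normalize_eq_self_of_norm_eq_one hx]

theorem hausdorffMeasure_sphere_lt_top (m : ℕ) :
    μH[m] (sphere (0 : EuclideanSpace ℝ (Fin (m + 1))) 1) < ⊤ := by
  refine (measure_mono (sphere_subset_iUnion_normalize_face m)).trans_lt ?_
  refine (measure_iUnion_fintype_le _ _).trans_lt (ENNReal.sum_lt_top.2 fun i _ => ?_)
  refine (measure_biUnion_finset_le _ _).trans_lt (ENNReal.sum_lt_top.2 fun σ hσ => ?_)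
  have hσ1 : |σ| = 1 := by rcases Finset.mem_insert.1 hσ with rfl | h <;> simp_all
  have hface : LipschitzOnWith
      (2 * ((Fintype.card (Fin (m + 1)) : ℝ≥0) ^ (1 / (2 : ℝ≥0∞)).toReal * 1))
      (fun y : Fin m → ℝ => NormedSpace.normalize (WithLp.toLp 2 (Fin.insertNth i σ y) :
        EuclideanSpace ℝ (Fin (m + 1)))) (Icc (-1) 1) := by
    refine lipschitzOnWith_normalize.comp
      ((PiLp.lipschitzWith_toLp 2 _).comp
        (LipschitzWith.of_dist_le_mul fun y z => ?_)).lipschitzOnWith fun y _ => ?_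
    · simp [Fin.dist_insertNth_insertNth]
    · simpa [hσ1] using PiLp.norm_apply_le (WithLp.toLp 2 (Fin.insertNth i σ y) :
        EuclideanSpace ℝ (Fin (m + 1))) i
  refine (hface.hausdorffMeasure_image_le (Nat.cast_nonneg m)).trans_lt
    (ENNReal.mul_lt_top (by finiteness) ?_)
  have := hausdorffMeasure_pi_real (ι := Fin m)
  rw [Fintype.card_fin] at this
  rw [this]
  exact measure_Icc_lt_top

theorem isFiniteMeasure_sphMeas {d : ℕ} (hd : 0 < d) : IsFiniteMeasure (sphMeas d 1) := by
  obtain ⟨m, rfl⟩ : ∃ m, d = m + 1 := ⟨d - 1, by omega⟩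
  refine ⟨?_⟩
  rw [sphMeas, Measure.restrict_apply_univ, Nat.cast_succ, add_sub_cancel_right]
  exact hausdorffMeasure_sphere_lt_top m

theorem norm_e1 {d : ℕ} (hd : 0 < d) : ‖e1 d‖ = 1 := by
  simp [e1, hd]

theorem measurable_of_le_imp_le {β : Type*} [MeasurableSpace β] {u k : β → ℝ}
    (hu : Measurable u) (hk : ∀ x y, u x ≤ u y → k x ≤ k y) : Measurable k := by
  refine measurable_of_Ioi fun c => ?_
  have hV : IsUpperSet {r : ℝ | ∃ y, c < k y ∧ u y ≤ r} :=
    fun r r' hrr' ⟨y, hy, hyr⟩ => ⟨y, hy, hyr.trans hrr'⟩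
  convert hu hV.ordConnected.measurableSet using 1
  ext x
  exact ⟨fun hx => ⟨x, hx, le_rfl⟩, fun ⟨y, hy, hyx⟩ => hy.trans_le (hk y x hyx)⟩

namespace IsCapSymmSphere

variable {d : ℕ} {g gs : Euc d → ℝ}

theorem aemeasurable (hs : IsCapSymmSphere d g gs) : AEMeasurable gs (sphMeas d 1) := by
  rw [sphMeas, aemeasurable_restrict_iff_comap_subtype isClosed_sphere.measurableSet]
  exact (measurable_of_le_imp_le (u := fun x : sphere (0 : Euc d) 1 => ⟪(x : Euc d), e1 d⟫)
    (by fun_prop) fun x y hxy => hs.1 x y x.2 y.2 hxy).aemeasurable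

theorem ae_norm_le (hd : 0 < d) (hs : IsCapSymmSphere d g gs) :
    ∀ᵐ x ∂(sphMeas d 1), ‖gs x‖ ≤ max |gs (-e1 d)| |gs (e1 d)| := by
  have he : e1 d ∈ sphere (0 : Euc d) 1 := mem_sphere_zero_iff_norm.2 (norm_e1 hd)
  have hne : -e1 d ∈ sphere (0 : Euc d) 1 := by
    rwa [mem_sphere_zero_iff_norm, norm_neg, ← mem_sphere_zero_iff_norm]
  have hee : ⟪e1 d, e1 d⟫ = 1 := by rw [real_inner_self_eq_norm_sq, norm_e1 hd, one_pow]
  filter_upwards [ae_restrict_mem isClosed_sphere.measurableSet] with x hx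
  have hxe := abs_real_inner_le_norm x (e1 d)
  rw [mem_sphere_zero_iff_norm.1 hx, norm_e1 hd, one_mul, abs_le] at hxe
  exact abs_le_max_abs_abs (hs.1 _ _ hne hx (by rw [inner_neg_left, hee]; exact hxe.1))
    (hs.1 _ _ hx he (by rw [hee]; exact hxe.2))

theorem lt_imp_le {g₂ : Euc d → ℝ} (hs : IsCapSymmSphere d g gs)
    (h₂ : IsCapSymmSphere d g₂ g₂) :
    ∀ x ∈ sphere (0 : Euc d) 1, ∀ y ∈ sphere (0 : Euc d) 1, g₂ x < g₂ y → gs x ≤ gs y := by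
  intro x hx y hy hxy
  rcases le_total ⟪x, e1 d⟫ ⟪y, e1 d⟫ with h | h
  · exact hs.1 x y hx hy h
  · exact absurd (h₂.1 y x hy hx h) hxy.not_ge

end IsCapSymmSphere

theorem stmt11_general (d : ℕ) (hd : 0 < d) (g₁ g₂ g₁s : Euc d → ℝ)
    (hm1 : MemLp g₁ 2 (sphMeas d 1))
    (hg2symm : IsCapSymmSphere d g₂ g₂)
    (hlev : ∀ t : ℝ, sphMeas d 1 {x | g₂ x = t} = 0)
    (hg1s : IsCapSymmSphere d g₁ g₁s)
    (heq : (∫ x, g₁ x * g₂ x ∂(sphMeas d 1)) = ∫ x, g₁s x * g₂ x ∂(sphMeas d 1)) :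
    g₁ =ᵐ[sphMeas d 1] g₁s := by
  have := isFiniteMeasure_sphMeas hd
  have hg₁ : Integrable g₁ (sphMeas d 1) := hm1.integrable one_le_two
  have hg₁s : Integrable g₁s (sphMeas d 1) :=
    .of_bound hg1s.aemeasurable.aestronglyMeasurable _ (hg1s.ae_norm_le hd)
  have hg₂ := hg2symm.aemeasurable
  exact ae_eq_of_integral_mul_eq (ae_restrict_mem isClosed_sphere.measurableSet) hg₁ hg₁s
    (identDistrib_of_measure_le_eq hm1.aemeasurable hg1s.aemeasurable hg1s.2) hg₂
    (hg1s.lt_imp_le hg2symm) hlev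
    (hg₁.mul_bdd hg₂.aestronglyMeasurable (hg2symm.ae_norm_le hd))
    (hg₁s.mul_bdd hg₂.aestronglyMeasurable (hg2symm.ae_norm_le hd)) heq

/-- Rigidity in the Hardy–Littlewood inequality on the sphere:
if g₂ = g₂^♯ is symmetric decreasing about e₁ with all level sets of measure zero,
g₁ is not a.e. constant, and ∫ g₁g₂ = ∫ g₁^♯ g₂^♯, then g₁ = g₁^♯ (a.e.), i.e. every
superlevel set of g₁ is (up to null sets) a geodesic cap centered at e₁. -/
theorem stmt11 (d : ℕ) (hd : 0 < d) (g₁ g₂ g₁s : Euc d → ℝ)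
    (hm1 : MemLp g₁ 2 (sphMeas d 1)) (hm2 : MemLp g₂ 2 (sphMeas d 1))
    (hg2symm : IsCapSymmSphere d g₂ g₂)
    (hg1nc : ¬ ∃ c : ℝ, g₁ =ᵐ[sphMeas d 1] fun _ => c)
    (hlev : ∀ t : ℝ, sphMeas d 1 {x | g₂ x = t} = 0)
    (hg1s : IsCapSymmSphere d g₁ g₁s)
    (heq : (∫ x, g₁ x * g₂ x ∂(sphMeas d 1)) = ∫ x, g₁s x * g₂ x ∂(sphMeas d 1)) :
    g₁ =ᵐ[sphMeas d 1] g₁s :=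
  stmt11_general d hd g₁ g₂ g₁s hm1 hg2symm hlev hg1s heq
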